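/- arXiv:1309.4684 — 3 statements merged into one kernel-verified Lean document; each statement's English description precedes it below -/
import Mathlib

section
/- Let X be a Banach space, B ⊆ X a closed convex set, and z** an element of the weak* closure of B in X**. Then the following are equivalent: (1) z** does not belong to the (I)-envelope of B; (2) there is a sequence (ξₙ*) in B_{X*} such that sup_{x ∈ B} limsup_{n→∞} ξₙ*(x) < inf_{n ∈ ℕ} z**(ξₙ*); (3) there is a sequence (ξₙ*) in B_{X*} such that sup_{x ∈ B} limsup_{n→∞} ξₙ*(x) < liminf_{n→∞} z**(ξₙ*); (4) there is a sequence (ξₙ*) in B_{X*} such that sup_{x ∈ B} limsup_{n→∞} ξₙ*(x) < limsup_{n→∞} z**(ξₙ*). -/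
open Filter Metric Topology

/-- Measure of weak non-cauchyness of a sequence in the dual:
`δ_w(f) = sup_{F ∈ B_{X**}} inf_n sup_{k,l ≥ n} |F(f k) - F(f l)|`. -/
noncomputable def deltaW {X : Type*} [NormedAddCommGroup X] [NormedSpace ℝ X]
    (f : ℕ → X →L[ℝ] ℝ) : ℝ :=
  ⨆ F : (closedBall (0 : (X →L[ℝ] ℝ) →L[ℝ] ℝ) 1),
    ⨅ n : ℕ, ⨆ p : {p : ℕ × ℕ // n ≤ p.1 ∧ n ≤ p.2},
      |F.1 (f p.1.1) - F.1 (f p.1.2)|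

/-- Measure of weak* non-cauchyness of a sequence in the dual:
`δ_{w*}(f) = sup_{x ∈ B_X} inf_n sup_{k,l ≥ n} |f k x - f l x|`. -/
noncomputable def deltaWStar {X : Type*} [NormedAddCommGroup X] [NormedSpace ℝ X]
    (f : ℕ → X →L[ℝ] ℝ) : ℝ :=
  ⨆ x : (closedBall (0 : X) 1),
    ⨅ n : ℕ, ⨆ p : {p : ℕ × ℕ // n ≤ p.1 ∧ n ≤ p.2},
      |f p.1.1 x.1 - f p.1.2 x.1|

/-- `X` is `c`-Grothendieck if `δ_w(f) ≤ c · δ_{w*}(f)` for every bounded sequence `f` in `X*`. -/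
def IsCGrothendieck (c : ℝ) (X : Type*) [NormedAddCommGroup X] [NormedSpace ℝ X] : Prop :=
  ∀ f : ℕ → X →L[ℝ] ℝ, Bornology.IsBounded (Set.range f) → deltaW f ≤ c * deltaWStar f
/-- The weak* closure of a subset of a dual space. -/
noncomputable def wStarClosure {E : Type*} [NormedAddCommGroup E] [NormedSpace ℝ E]
    (S : Set (E →L[ℝ] ℝ)) : Set (E →L[ℝ] ℝ) :=
  closure (X := WeakDual ℝ E) S

/-- The (I)-envelope of a set `B ⊆ X`, viewed as a subset of the bidual `X**`: the
intersection over all countable decompositions `B = ⋃ n, C n` of the norm closure of the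
convex hull of the union of the weak* closures (in `X**`) of the convex hulls of the `C n`. -/
noncomputable def Ienv {X : Type*} [NormedAddCommGroup X] [NormedSpace ℝ X] (B : Set X) :
    Set ((X →L[ℝ] ℝ) →L[ℝ] ℝ) :=
  ⋂ C ∈ {C : ℕ → Set X | B = ⋃ n, C n},
    closure (convexHull ℝ (⋃ n, wStarClosure
      ((NormedSpace.inclusionInDoubleDual ℝ X) '' (convexHull ℝ (C n)))))

/-!
(2) ⇒ (3) ⇒ (4) is monotonicity of `inf ≤ liminf ≤ limsup`, and (4) ⇒ (2) passes to a
subsequence along which `z (ξ n)` stays above a level strictly between `r` and the limsup.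

(2) ⇒ (1): for `r < s < inf_n z (ξ n)`, the sets `C N = {x ∈ B | ξ n x ≤ s for all n ≥ N}`
decompose `B`, and the weak* closed convex hull of each `J (C N)` lies in the convex set
`{F | F (ξ n) ≤ s eventually}`, whose norm distance from `z` is at least `inf_n z (ξ n) - s`.

(1) ⇒ (4): take a decomposition `B = ⋃ m, C m` with `z` at positive distance `δ` from
`conv ⋃ m, K m`, where `K m` is the weak* closure of `J (conv C m)`. After cutting the `C m`
into bounded pieces the `K m` are weak* compact (Banach–Alaoglu), hence so is
`conv (K 0 ∪ ⋯ ∪ K n)`, and the weak* Hahn–Banach theorem yields `ξ n ∈ B_{X*}` separating it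
from `z` with margin `δ / 2`. Each `x ∈ B` lies in some `C m`, so `ξ n x ≤ z (ξ n) - δ / 2` for
all `n ≥ m`.
-/

open Set Pointwise

section WeakStar

variable {E : Type*} [NormedAddCommGroup E] [NormedSpace ℝ E]

theorem WeakDual.exists_apply_eq_eval (f : StrongDual ℝ (WeakDual ℝ E)) :
    ∃ x : E, ∀ F : WeakDual ℝ E, f F = F x := by
  obtain ⟨x, rfl⟩ := LinearMap.dualEmbedding_surjective (topDualPairing ℝ E) f
  exact ⟨x, fun _ => rfl⟩

theorem wStarClosure_mono {S T : Set (E →L[ℝ] ℝ)} (h : S ⊆ T) :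
    wStarClosure S ⊆ wStarClosure T :=
  closure_mono (X := WeakDual ℝ E) h

theorem convex_wStarClosure {S : Set (E →L[ℝ] ℝ)} (hS : Convex ℝ S) :
    Convex ℝ (wStarClosure S) :=
  Convex.closure (E := WeakDual ℝ E) hS

theorem isCompact_wStarClosure {S : Set (E →L[ℝ] ℝ)} (hS : Bornology.IsBounded S) :
    IsCompact (X := WeakDual ℝ E) (wStarClosure S) := by
  obtain ⟨R, hR⟩ := hS.subset_closedBall 0
  exact (WeakDual.isCompact_closedBall (𝕜 := ℝ) 0 R).of_isClosed_subset isClosed_closure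
    (closure_minimal (X := WeakDual ℝ E) hR (WeakDual.isClosed_closedBall 0 R))

/-- The ε-neighbourhood of `S` is still weak* compact by Banach–Alaoglu, so the weak*
Hahn–Banach theorem separates it from `z` by an element of `E`. -/
theorem exists_norm_le_one_forall_add_le {S : Set (E →L[ℝ] ℝ)}
    (hS : IsCompact (X := WeakDual ℝ E) S) (hSconv : Convex ℝ S) (z : E →L[ℝ] ℝ) {ε : ℝ}
    (hε : 0 ≤ ε) (hz : ∀ w ∈ S, ε < ‖z - w‖) :
    ∃ x : E, ‖x‖ ≤ 1 ∧ ∀ w ∈ S, w x + ε ≤ z x := by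
  rcases S.eq_empty_or_nonempty with rfl | ⟨w₀, hw₀⟩
  · exact ⟨0, by simp, by simp⟩
  have hT : IsCompact (X := WeakDual ℝ E) (S + closedBall 0 ε) :=
    hS.add (WeakDual.isCompact_closedBall (𝕜 := ℝ) 0 ε)
  have hzT : z ∉ S + closedBall 0 ε := by
    rintro ⟨w, hw, b, hb, rfl⟩
    have := hz w hw
    rw [add_sub_cancel_left] at this
    exact (mem_closedBall_zero_iff.1 hb).not_gt this
  have : LocallyConvexSpace ℝ (WeakDual ℝ E) := WeakBilin.locallyConvexSpace
  obtain ⟨f, u, hfT, hfz⟩ := geometric_hahn_banach_closed_point (E := WeakDual ℝ E)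
    (hSconv.add (convex_closedBall 0 ε)) hT.isClosed hzT
  obtain ⟨x, hx⟩ := WeakDual.exists_apply_eq_eval f
  have hsep : ∀ w ∈ S + closedBall 0 ε, w x < z x := fun w hw =>
    (hx w).symm.trans_lt (((hfT w hw).trans hfz).trans_eq (hx z))
  have hx0 : x ≠ 0 := by
    rintro rfl
    simpa using hsep w₀ (by simpa using add_mem_add hw₀ (mem_closedBall_self (x := 0) hε))
  have hpos : 0 < ‖x‖ := norm_pos_iff.2 hx0
  obtain ⟨g, hg, hgx⟩ := exists_dual_vector ℝ x hpos.ne'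
  refine ⟨‖x‖⁻¹ • x, by simp [norm_smul, hpos.ne'], fun w hw => ?_⟩
  have hwx : w x + ε * ‖x‖ < z x := by
    simpa [hgx] using hsep (w + ε • g)
      (add_mem_add hw (by simp [norm_smul, hg, abs_of_nonneg hε]))
  simp only [map_smul, smul_eq_mul]
  rw [show ε = ‖x‖⁻¹ * (ε * ‖x‖) by field_simp, ← mul_add]
  exact mul_le_mul_of_nonneg_left hwx.le (by positivity)

end WeakStar

section ConvexHullCompact

variable {V : Type*} [AddCommGroup V] [Module ℝ V] [TopologicalSpace V] [ContinuousAdd V]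
  [ContinuousSMul ℝ V]

theorem IsCompact.convexHull_union {K L : Set V} (hK : IsCompact K) (hL : IsCompact L)
    (hKc : Convex ℝ K) (hLc : Convex ℝ L) : IsCompact (convexHull ℝ (K ∪ L)) := by
  rcases K.eq_empty_or_nonempty with rfl | hK₀
  · simpa [hLc.convexHull_eq] using hL
  rcases L.eq_empty_or_nonempty with rfl | hL₀
  · simpa [hKc.convexHull_eq] using hK
  have hjoin : convexJoin ℝ K L =
      (fun p : ℝ × V × V => (1 - p.1) • p.2.1 + p.1 • p.2.2) '' (Icc 0 1 ×ˢ K ×ˢ L) := by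
    ext v
    simp only [mem_convexJoin, segment_eq_image, mem_image, mem_prod, Prod.exists]
    grind
  rw [hKc.convexHull_union hLc hK₀ hL₀, hjoin]
  exact (isCompact_Icc.prod (hK.prod hL)).image (by fun_prop)

theorem isCompact_convexHull_biUnion {ι : Type*} (s : Finset ι) {K : ι → Set V}
    (hK : ∀ i ∈ s, IsCompact (K i)) (hKc : ∀ i ∈ s, Convex ℝ (K i)) :
    IsCompact (convexHull ℝ (⋃ i ∈ s, K i)) := by
  classical
  induction s using Finset.induction_on with
  | empty => simp
  | insert i s _ ih =>
    rw [Finset.set_biUnion_insert, union_comm, ← convexHull_convexHull_union_left]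
    exact (ih (fun j hj => hK j (by simp [hj])) (fun j hj => hKc j (by simp [hj]))).convexHull_union
      (hK i (by simp)) (convex_convexHull ℝ _) (hKc i (by simp))

end ConvexHullCompact

section BoundedRealSequences

variable {u v : ℕ → ℝ} {C D : ℝ}

theorem isBoundedUnder_of_abs_le {ι : Type*} {l : Filter ι} {u : ι → ℝ} (h : ∀ i, |u i| ≤ C) :
    l.IsBoundedUnder (· ≤ ·) u ∧ l.IsBoundedUnder (· ≥ ·) u :=
  isBoundedUnder_le_abs.1 (isBoundedUnder_of ⟨C, h⟩)

theorem bddBelow_range_of_abs_le {ι : Type*} {u : ι → ℝ} (h : ∀ i, |u i| ≤ C) :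
    BddBelow (range u) :=
  ⟨-C, by rintro _ ⟨i, rfl⟩; exact (abs_le.1 (h i)).1⟩

theorem iInf_le_liminf_of_abs_le (h : ∀ n, |u n| ≤ C) : ⨅ n, u n ≤ liminf u atTop :=
  le_liminf_of_le (isBoundedUnder_of_abs_le h).1.isCoboundedUnder_ge <|
    .of_forall (ciInf_le (bddBelow_range_of_abs_le h))

theorem liminf_le_limsup_of_abs_le (h : ∀ n, |u n| ≤ C) : liminf u atTop ≤ limsup u atTop :=
  liminf_le_limsup (isBoundedUnder_of_abs_le h).1 (isBoundedUnder_of_abs_le h).2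

theorem exists_strictMono_lt_iInf_of_lt_limsup (h : ∀ n, |u n| ≤ C) {r : ℝ}
    (hr : r < limsup u atTop) : ∃ φ : ℕ → ℕ, StrictMono φ ∧ r < ⨅ n, u (φ n) := by
  obtain ⟨s, hrs, hs⟩ := exists_between hr
  obtain ⟨φ, hφ, hφs⟩ := extraction_of_frequently_atTop <|
    frequently_lt_of_lt_limsup (isBoundedUnder_of_abs_le h).2.isCoboundedUnder_le hs
  exact ⟨φ, hφ, hrs.trans_le (le_ciInf fun n => (hφs n).le)⟩

theorem limsup_comp_le_of_strictMono (h : ∀ n, |u n| ≤ C) {φ : ℕ → ℕ} (hφ : StrictMono φ) :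
    limsup (u ∘ φ) atTop ≤ limsup u atTop :=
  hφ.tendsto_atTop.limsup_comp_le_limsup (isBoundedUnder_of_abs_le h).2.isCoboundedUnder_le
    (isBoundedUnder_of_abs_le h).1

theorem limsup_le_limsup_sub_of_eventually_add_le (hu : ∀ n, |u n| ≤ C) (hv : ∀ n, |v n| ≤ D)
    {ε : ℝ} (h : ∀ᶠ n in atTop, u n + ε ≤ v n) : limsup u atTop ≤ limsup v atTop - ε := by
  rw [le_sub_iff_add_le, ← limsup_add_const atTop u ε (isBoundedUnder_of_abs_le hu).1
    (isBoundedUnder_of_abs_le hu).2.isCoboundedUnder_le]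
  exact limsup_le_limsup h
    (isCoboundedUnder_le_of_le atTop fun n => add_le_add_left (abs_le.1 (hu n)).1 ε)
    (isBoundedUnder_of_abs_le hv).1

end BoundedRealSequences

theorem exists_isBounded_refinement {α : Type*} [PseudoMetricSpace α] [Nonempty α]
    (C : ℕ → Set α) : ∃ C' : ℕ → Set α, ⋃ k, C' k = ⋃ n, C n ∧ (∀ k, ∃ n, C' k ⊆ C n) ∧
      ∀ k, Bornology.IsBounded (C' k) := by
  obtain ⟨a⟩ := ‹Nonempty α›
  refine ⟨fun k => C k.unpair.1 ∩ closedBall a k.unpair.2, ?_, fun k => ⟨_, inter_subset_left⟩,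
    fun k => isBounded_closedBall.subset inter_subset_right⟩
  refine (iUnion_subset fun k => inter_subset_left.trans (subset_iUnion C _)).antisymm
    (iUnion_subset fun n x hx => mem_iUnion.2 ⟨Nat.pair n ⌈dist x a⌉₊, ?_⟩)
  simp [hx, Nat.le_ceil]

section DualSequences

variable {E : Type*} [NormedAddCommGroup E] [NormedSpace ℝ E]

theorem abs_apply_le_of_opNorm_le_one {f : E →L[ℝ] ℝ} (hf : ‖f‖ ≤ 1) (x : E) : |f x| ≤ ‖x‖ := by
  simpa using f.le_of_opNorm_le hf x

theorem abs_apply_le_opNorm_of_norm_le_one (f : E →L[ℝ] ℝ) {x : E} (hx : ‖x‖ ≤ 1) :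
    |f x| ≤ ‖f‖ := by
  simpa using f.le_opNorm_of_le hx

theorem convex_setOf_eventually_apply_le {ι : Type*} (l : Filter ι) (ξ : ι → E) (r : ℝ) :
    Convex ℝ {F : E →L[ℝ] ℝ | ∀ᶠ i in l, F (ξ i) ≤ r} := by
  intro F hF G hG a b ha hb hab
  filter_upwards [hF, hG] with i hFi hGi
  calc (a • F + b • G) (ξ i) = a * F (ξ i) + b * G (ξ i) := rfl
    _ ≤ a * r + b * r := by gcongr
    _ = r := by rw [← add_mul, hab, one_mul]

theorem notMem_closure_setOf_eventually_apply_le {ξ : ℕ → E} (hξ : ∀ n, ‖ξ n‖ ≤ 1)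
    {z : E →L[ℝ] ℝ} {r : ℝ} (hr : r < ⨅ n, z (ξ n)) :
    z ∉ closure {F : E →L[ℝ] ℝ | ∀ᶠ n in atTop, F (ξ n) ≤ r} := by
  rw [Metric.mem_closure_iff]
  push Not
  refine ⟨_, sub_pos.2 hr, fun G hG => ?_⟩
  obtain ⟨n, hn⟩ := hG.exists
  have hzn : ⨅ n, z (ξ n) ≤ z (ξ n) := ciInf_le (bddBelow_range_of_abs_le
    fun m => abs_apply_le_opNorm_of_norm_le_one z (hξ m)) n
  have hzG : (z - G) (ξ n) ≤ dist z G := by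
    rw [dist_eq_norm]
    exact (le_abs_self _).trans (abs_apply_le_opNorm_of_norm_le_one _ (hξ n))
  simp only [sub_apply] at hzG
  linarith

theorem exists_limsup_le_lt_iInf_of_lt_limsup {B : Set E} {z : (E →L[ℝ] ℝ) →L[ℝ] ℝ}
    {ξ : ℕ → E →L[ℝ] ℝ} (hξ : ∀ n, ‖ξ n‖ ≤ 1) {r : ℝ}
    (hr : ∀ x ∈ B, limsup (fun n => ξ n x) atTop ≤ r)
    (hrz : r < limsup (fun n => z (ξ n)) atTop) :
    ∃ ξ' : ℕ → E →L[ℝ] ℝ, (∀ n, ‖ξ' n‖ ≤ 1) ∧ ∃ r : ℝ,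
      (∀ x ∈ B, limsup (fun n => ξ' n x) atTop ≤ r) ∧ r < ⨅ n, z (ξ' n) := by
  obtain ⟨φ, hφ, hrφ⟩ := exists_strictMono_lt_iInf_of_lt_limsup
    (fun n => abs_apply_le_opNorm_of_norm_le_one z (hξ n)) hrz
  refine ⟨ξ ∘ φ, fun n => hξ (φ n), r, fun x hx => ?_, hrφ⟩
  exact (limsup_comp_le_of_strictMono (u := fun n => ξ n x)
    (fun n => abs_apply_le_of_opNorm_le_one (hξ n) x) hφ).trans (hr x hx)

end DualSequences

section Envelope

variable {X : Type*} [NormedAddCommGroup X] [NormedSpace ℝ X]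

local notation "J" => NormedSpace.inclusionInDoubleDual ℝ X

noncomputable def ienvHull (C : ℕ → Set X) : Set ((X →L[ℝ] ℝ) →L[ℝ] ℝ) :=
  convexHull ℝ (⋃ n, wStarClosure (J '' convexHull ℝ (C n)))

theorem mem_Ienv_iff {B : Set X} {z : (X →L[ℝ] ℝ) →L[ℝ] ℝ} :
    z ∈ Ienv B ↔ ∀ C : ℕ → Set X, B = ⋃ n, C n → z ∈ closure (ienvHull C) := by
  simp [Ienv, ienvHull]

theorem ienvHull_mono {C C' : ℕ → Set X} (h : ∀ k, ∃ n, C' k ⊆ C n) :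
    ienvHull C' ⊆ ienvHull C :=
  convexHull_mono <| iUnion_mono' fun k =>
    (h k).imp fun _ hn => wStarClosure_mono (image_mono (convexHull_mono hn))

theorem notMem_Ienv_of_limsup_le_lt_iInf {B : Set X} {z : (X →L[ℝ] ℝ) →L[ℝ] ℝ}
    {ξ : ℕ → X →L[ℝ] ℝ} (hξ : ∀ n, ‖ξ n‖ ≤ 1) {r : ℝ}
    (hr : ∀ x ∈ B, limsup (fun n => ξ n x) atTop ≤ r) (hrz : r < ⨅ n, z (ξ n)) :
    z ∉ Ienv B := by
  obtain ⟨s, hrs, hsz⟩ := exists_between hrz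
  set C : ℕ → Set X := fun N => {x ∈ B | ∀ n ≥ N, ξ n x ≤ s}
  have hB : B = ⋃ N, C N := by
    refine subset_antisymm (fun x hx => ?_) (iUnion_subset fun N => sep_subset _ _)
    obtain ⟨N, hN⟩ := eventually_atTop.1 <| eventually_lt_of_limsup_lt ((hr x hx).trans_lt hrs)
      (isBoundedUnder_of_abs_le fun n => abs_apply_le_of_opNorm_le_one (hξ n) x).1
    exact mem_iUnion.2 ⟨N, hx, fun n hn => (hN n hn).le⟩
  have hJC (N : ℕ) : J '' convexHull ℝ (C N) ⊆ ⋂ n ∈ Ici N, {F | F (ξ n) ≤ s} := by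
    rw [show J '' convexHull ℝ (C N) = convexHull ℝ (J '' C N) from
      (J).toLinearMap.image_convexHull _]
    refine convexHull_min ?_ (convex_iInter₂ fun n _ => convex_halfSpace_le
      (ContinuousLinearMap.apply ℝ ℝ (ξ n)).isLinear s)
    rintro _ ⟨x, hx, rfl⟩
    simpa using hx.2
  have hC (N : ℕ) : wStarClosure (J '' convexHull ℝ (C N)) ⊆ ⋂ n ∈ Ici N, {F | F (ξ n) ≤ s} :=
    closure_minimal (X := WeakDual ℝ (X →L[ℝ] ℝ)) (hJC N)
      (isClosed_biInter fun n _ => isClosed_le (WeakDual.eval_continuous (ξ n)) continuous_const)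
  have hsub : ienvHull C ⊆ {F | ∀ᶠ n in atTop, F (ξ n) ≤ s} :=
    convexHull_min (iUnion_subset fun N => (hC N).trans fun F hF =>
      eventually_atTop.2 ⟨N, by simpa using hF⟩) (convex_setOf_eventually_apply_le _ _ _)
  exact fun hz => notMem_closure_setOf_eventually_apply_le hξ hsz
    (closure_mono hsub (mem_Ienv_iff.1 hz C hB))

theorem exists_forall_add_le_of_notMem_closure_ienvHull {C : ℕ → Set X}
    (hC : ∀ n, Bornology.IsBounded (C n)) {z : (X →L[ℝ] ℝ) →L[ℝ] ℝ}
    (hz : z ∉ closure (ienvHull C)) :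
    ∃ ξ : ℕ → X →L[ℝ] ℝ, (∀ n, ‖ξ n‖ ≤ 1) ∧
      ∃ ε > 0, ∀ m n, m ≤ n → ∀ x ∈ C m, ξ n x + ε ≤ z (ξ n) := by
  obtain ⟨δ, hδ, hzδ⟩ : ∃ δ > 0, ∀ w ∈ ienvHull C, δ ≤ dist z w := by
    simpa using mt Metric.mem_closure_iff.2 hz
  set K : ℕ → Set ((X →L[ℝ] ℝ) →L[ℝ] ℝ) := fun m => wStarClosure (J '' convexHull ℝ (C m))
  have hK (m : ℕ) : IsCompact (X := WeakDual ℝ (X →L[ℝ] ℝ)) (K m) :=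
    isCompact_wStarClosure <| (NormedSpace.inclusionInDoubleDualLi ℝ).lipschitz.isBounded_image
      (isBounded_convexHull.2 (hC m))
  have hKc (m : ℕ) : Convex ℝ (K m) :=
    convex_wStarClosure ((convex_convexHull ℝ (C m)).linear_image (J).toLinearMap)
  have hsep (n : ℕ) : ∃ ξ : X →L[ℝ] ℝ, ‖ξ‖ ≤ 1 ∧
      ∀ w ∈ convexHull ℝ (⋃ m ∈ Finset.range (n + 1), K m), w ξ + δ / 2 ≤ z ξ := by
    refine exists_norm_le_one_forall_add_le ?_ (convex_convexHull ℝ _) z (by positivity) ?_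
    · exact isCompact_convexHull_biUnion (V := WeakDual ℝ (X →L[ℝ] ℝ)) _ (fun m _ => hK m)
        fun m _ => hKc m
    · intro w hw
      rw [← dist_eq_norm]
      exact (half_lt_self hδ).trans_le
        (hzδ w (convexHull_mono (iUnion₂_subset fun m _ => subset_iUnion K m) hw))
  choose ξ hξ1 hξ using hsep
  refine ⟨ξ, hξ1, δ / 2, half_pos hδ, fun m n hmn x hx => hξ n (J x) (subset_convexHull ℝ _ ?_)⟩
  exact mem_biUnion (Finset.mem_range.2 (Nat.lt_succ_of_le hmn))
    (subset_closure (X := WeakDual ℝ (X →L[ℝ] ℝ)) (mem_image_of_mem J (subset_convexHull ℝ _ hx)))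

theorem exists_limsup_le_lt_limsup_of_notMem_Ienv {B : Set X} {z : (X →L[ℝ] ℝ) →L[ℝ] ℝ}
    (hz : z ∉ Ienv B) :
    ∃ ξ : ℕ → X →L[ℝ] ℝ, (∀ n, ‖ξ n‖ ≤ 1) ∧ ∃ r : ℝ,
      (∀ x ∈ B, limsup (fun n => ξ n x) atTop ≤ r) ∧ r < limsup (fun n => z (ξ n)) atTop := by
  obtain ⟨C, hB, hzC⟩ : ∃ C : ℕ → Set X, B = ⋃ n, C n ∧ z ∉ closure (ienvHull C) := by
    simpa [mem_Ienv_iff] using hz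
  obtain ⟨C', hC'C, hC'sub, hC'bdd⟩ := exists_isBounded_refinement C
  obtain ⟨ξ, hξ, ε, hε, hξz⟩ := exists_forall_add_le_of_notMem_closure_ienvHull hC'bdd
    fun h => hzC (closure_mono (ienvHull_mono hC'sub) h)
  refine ⟨ξ, hξ, limsup (fun n => z (ξ n)) atTop - ε, fun x hx => ?_, sub_lt_self _ hε⟩
  obtain ⟨m, hm⟩ := mem_iUnion.1 (hC'C ▸ hB ▸ hx)
  exact limsup_le_limsup_sub_of_eventually_add_le
    (fun n => abs_apply_le_of_opNorm_le_one (hξ n) x)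
    (fun n => abs_apply_le_opNorm_of_norm_le_one z (hξ n))
    (eventually_atTop.2 ⟨m, fun n hn => hξz m n hn x hm⟩)

end Envelope

theorem notMem_ienv_tfae_general {X : Type*} [NormedAddCommGroup X] [NormedSpace ℝ X]
    (B : Set X)
    (z : (X →L[ℝ] ℝ) →L[ℝ] ℝ) :
    List.TFAE
      [ z ∉ Ienv B,
        ∃ ξ : ℕ → X →L[ℝ] ℝ, (∀ n, ‖ξ n‖ ≤ 1) ∧
          ∃ r : ℝ, (∀ x ∈ B, Filter.limsup (fun n => ξ n x) Filter.atTop ≤ r) ∧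
            r < ⨅ n : ℕ, z (ξ n),
        ∃ ξ : ℕ → X →L[ℝ] ℝ, (∀ n, ‖ξ n‖ ≤ 1) ∧
          ∃ r : ℝ, (∀ x ∈ B, Filter.limsup (fun n => ξ n x) Filter.atTop ≤ r) ∧
            r < Filter.liminf (fun n => z (ξ n)) Filter.atTop,
        ∃ ξ : ℕ → X →L[ℝ] ℝ, (∀ n, ‖ξ n‖ ≤ 1) ∧
          ∃ r : ℝ, (∀ x ∈ B, Filter.limsup (fun n => ξ n x) Filter.atTop ≤ r) ∧
            r < Filter.limsup (fun n => z (ξ n)) Filter.atTop ] := by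
  have hzbdd {ξ : ℕ → X →L[ℝ] ℝ} (hξ : ∀ n, ‖ξ n‖ ≤ 1) (n : ℕ) : |z (ξ n)| ≤ ‖z‖ :=
    abs_apply_le_opNorm_of_norm_le_one z (hξ n)
  tfae_have 1 → 4 := exists_limsup_le_lt_limsup_of_notMem_Ienv
  tfae_have 4 → 2 := fun ⟨_, hξ, _, hr, hrz⟩ => exists_limsup_le_lt_iInf_of_lt_limsup hξ hr hrz
  tfae_have 2 → 3 := fun ⟨ξ, hξ, r, hr, hrz⟩ =>
    ⟨ξ, hξ, r, hr, hrz.trans_le (iInf_le_liminf_of_abs_le (hzbdd hξ))⟩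
  tfae_have 3 → 4 := fun ⟨ξ, hξ, r, hr, hrz⟩ =>
    ⟨ξ, hξ, r, hr, hrz.trans_le (liminf_le_limsup_of_abs_le (hzbdd hξ))⟩
  tfae_have 2 → 1 := fun ⟨_, hξ, _, hr, hrz⟩ => notMem_Ienv_of_limsup_le_lt_iInf hξ hr hrz
  tfae_finish

/-- Kalenda's characterization of the (I)-envelope. For a closed convex set `B ⊆ X` and
`z ∈ X**` in the weak* closure of `B`, the following are equivalent: (1) `z ∉ (I)-env(B)`;
(2) there is a sequence `(ξ n)` in `B_{X*}` with `sup_{x ∈ B} limsup ξ n x < inf_n z (ξ n)`;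
(3) likewise with `liminf_n z (ξ n)`; (4) likewise with `limsup_n z (ξ n)`. The strict
inequality `sup_{x ∈ B} limsup_n (ξ n x) < α` is expressed by an intermediate real bound `r`. -/
theorem notMem_ienv_tfae {X : Type*} [NormedAddCommGroup X] [NormedSpace ℝ X] [CompleteSpace X]
    (B : Set X) (hBclosed : IsClosed B) (hBconv : Convex ℝ B)
    (z : (X →L[ℝ] ℝ) →L[ℝ] ℝ)
    (hz : z ∈ wStarClosure ((NormedSpace.inclusionInDoubleDual ℝ X) '' B)) :
    List.TFAE
      [ z ∉ Ienv B,
        ∃ ξ : ℕ → X →L[ℝ] ℝ, (∀ n, ‖ξ n‖ ≤ 1) ∧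
          ∃ r : ℝ, (∀ x ∈ B, Filter.limsup (fun n => ξ n x) Filter.atTop ≤ r) ∧
            r < ⨅ n : ℕ, z (ξ n),
        ∃ ξ : ℕ → X →L[ℝ] ℝ, (∀ n, ‖ξ n‖ ≤ 1) ∧
          ∃ r : ℝ, (∀ x ∈ B, Filter.limsup (fun n => ξ n x) Filter.atTop ≤ r) ∧
            r < Filter.liminf (fun n => z (ξ n)) Filter.atTop,
        ∃ ξ : ℕ → X →L[ℝ] ℝ, (∀ n, ‖ξ n‖ ≤ 1) ∧
          ∃ r : ℝ, (∀ x ∈ B, Filter.limsup (fun n => ξ n x) Filter.atTop ≤ r) ∧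
            r < Filter.limsup (fun n => z (ξ n)) Filter.atTop ] :=
  notMem_ienv_tfae_general B z
end

section
/- Let X be a Banach space and c ≥ 1. If X is c-Grothendieck and Y is a quotient of X (i.e., there exists a surjective bounded linear quotient map q : X → Y mapping the open unit ball of X onto the open unit ball of Y), then Y is c-Grothendieck. -/
/-!
Precomposition with `q` embeds `Y*` isometrically into `X*`, because `q` maps the open unit
ball onto the open unit ball. By Hahn–Banach every element of the unit ball of `Y**` extends to
one of the unit ball of `X**`, so `δ_w` can only grow along this embedding; and `δ_{w*}` can only
shrink, because `q` maps the closed unit ball of `X` into that of `Y`.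
-/

open Filter Metric Topology

open Set Bornology

theorem LinearIsometry.exists_extension_norm_eq {𝕜 E F : Type*} [RCLike 𝕜]
    [NormedAddCommGroup E] [NormedSpace 𝕜 E] [NormedAddCommGroup F] [NormedSpace 𝕜 F]
    (T : E →ₗᵢ[𝕜] F) (G : E →L[𝕜] 𝕜) :
    ∃ H : F →L[𝕜] 𝕜, H.comp T.toContinuousLinearMap = G ∧ ‖H‖ = ‖G‖ := by
  obtain ⟨H, hHG, hH⟩ := _root_.exists_extension_norm_eq _
    (G.comp (T.equivRange.symm : LinearMap.range T.toLinearMap →L[𝕜] E))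
  refine ⟨H, ContinuousLinearMap.ext fun x => ?_, by
    rw [hH, G.opNorm_comp_linearIsometryEquiv]⟩
  simpa using hHG (T.equivRange x)

namespace ContinuousLinearMap

variable {𝕜 X Y Z : Type*} [RCLike 𝕜] [NormedAddCommGroup X] [NormedSpace 𝕜 X]
  [NormedAddCommGroup Y] [NormedSpace 𝕜 Y] [NormedAddCommGroup Z] [NormedSpace 𝕜 Z]
  {q : X →L[𝕜] Y}

theorem opNorm_comp_eq_of_image_ball (hq : q '' ball 0 1 = ball 0 1) (φ : Y →L[𝕜] Z) :
    ‖φ.comp q‖ = ‖φ‖ := by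
  rw [← sSup_unit_ball_eq_norm, ← sSup_unit_ball_eq_norm φ, ← hq, image_image]
  rfl

theorem opNorm_le_one_of_image_ball (hq : q '' ball 0 1 = ball 0 1) : ‖q‖ ≤ 1 :=
  opNorm_comp_eq_of_image_ball hq (ContinuousLinearMap.id 𝕜 Y) ▸ norm_id_le

variable (𝕜 Z) in
noncomputable def precompIsometry (hq : q '' ball 0 1 = ball 0 1) :
    (Y →L[𝕜] Z) →ₗᵢ[𝕜] (X →L[𝕜] Z) where
  toLinearMap := ((compL 𝕜 X Y Z).flip q).toLinearMap
  norm_map' := opNorm_comp_eq_of_image_ball hq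

end ContinuousLinearMap

noncomputable def tailOscillation (a : ℕ → ℝ) : ℝ :=
  ⨅ n : ℕ, ⨆ p : {p : ℕ × ℕ // n ≤ p.1 ∧ n ≤ p.2}, |a p.1.1 - a p.1.2|

theorem tailOscillation_le_of_abs_le {a : ℕ → ℝ} {M : ℝ} (h : ∀ k, |a k| ≤ M) :
    tailOscillation a ≤ 2 * M := by
  have hM : 0 ≤ M := (abs_nonneg _).trans (h 0)
  refine ciInf_le_of_le ⟨0, ?_⟩ 0 (Real.iSup_le (fun p => ?_) (by linarith))
  · rintro _ ⟨n, rfl⟩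
    exact Real.iSup_nonneg fun _ => abs_nonneg _
  · linarith [abs_sub (a p.1.1) (a p.1.2), h p.1.1, h p.1.2]

theorem bddAbove_range_tailOscillation {ι : Type*} {a : ι → ℕ → ℝ} {M : ℝ}
    (h : ∀ i k, |a i k| ≤ M) : BddAbove (range fun i => tailOscillation (a i)) :=
  ⟨2 * M, by rintro _ ⟨i, rfl⟩; exact tailOscillation_le_of_abs_le (h i)⟩

section Oscillation

variable {X Y : Type*} [NormedAddCommGroup X] [NormedSpace ℝ X]
  [NormedAddCommGroup Y] [NormedSpace ℝ Y]

theorem deltaW_eq_iSup_tailOscillation (f : ℕ → X →L[ℝ] ℝ) :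
    deltaW f = ⨆ F : closedBall (0 : (X →L[ℝ] ℝ) →L[ℝ] ℝ) 1,
      tailOscillation fun k => F.1 (f k) := rfl

theorem deltaWStar_eq_iSup_tailOscillation (f : ℕ → X →L[ℝ] ℝ) :
    deltaWStar f = ⨆ x : closedBall (0 : X) 1, tailOscillation fun k => f k x.1 := rfl

theorem deltaW_le_deltaW_comp (T : (Y →L[ℝ] ℝ) →ₗᵢ[ℝ] (X →L[ℝ] ℝ))
    {g : ℕ → Y →L[ℝ] ℝ} (hg : IsBounded (range g)) : deltaW g ≤ deltaW (T ∘ g) := by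
  obtain ⟨M, hM⟩ := isBounded_iff_forall_norm_le.1 hg
  have : Nonempty (closedBall (0 : (Y →L[ℝ] ℝ) →L[ℝ] ℝ) 1) := ⟨⟨0, by simp⟩⟩
  rw [deltaW_eq_iSup_tailOscillation, deltaW_eq_iSup_tailOscillation]
  refine ciSup_mono_of_forall_exists ?_ fun G => ?_
  · refine bddAbove_range_tailOscillation (M := M) fun F k => ?_
    simpa using
      F.1.le_of_opNorm_le_of_le (mem_closedBall_zero_iff.1 F.2)
        ((T.norm_map _).trans_le (hM _ ⟨k, rfl⟩))
  · obtain ⟨F, hFG, hF⟩ := T.exists_extension_norm_eq G.1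
    have hF1 : F ∈ closedBall 0 1 :=
      mem_closedBall_zero_iff.2 (hF.trans_le (mem_closedBall_zero_iff.1 G.2))
    refine ⟨⟨F, hF1⟩, le_of_eq ?_⟩
    simp [← hFG]

theorem deltaWStar_comp_le {q : X →L[ℝ] Y} (hq : ‖q‖ ≤ 1) {g : ℕ → Y →L[ℝ] ℝ}
    (hg : IsBounded (range g)) : deltaWStar (fun n => (g n).comp q) ≤ deltaWStar g := by
  obtain ⟨M, hM⟩ := isBounded_iff_forall_norm_le.1 hg
  have : Nonempty (closedBall (0 : X) 1) := ⟨⟨0, by simp⟩⟩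
  rw [deltaWStar_eq_iSup_tailOscillation, deltaWStar_eq_iSup_tailOscillation]
  refine ciSup_mono_of_forall_exists ?_ fun x => ⟨⟨q x, ?_⟩, le_rfl⟩
  · refine bddAbove_range_tailOscillation (M := M) fun y k => ?_
    simpa using (g k).le_of_opNorm_le_of_le (hM _ ⟨k, rfl⟩) (mem_closedBall_zero_iff.1 y.2)
  · simpa using q.le_of_opNorm_le_of_le hq (mem_closedBall_zero_iff.1 x.2)

end Oscillation

theorem isCGrothendieck_quotient_general {X Y : Type*} [NormedAddCommGroup X] [NormedSpace ℝ X]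
    [NormedAddCommGroup Y] [NormedSpace ℝ Y]
    (c : ℝ) (hc : 1 ≤ c) (hX : IsCGrothendieck c X)
    (q : X →L[ℝ] Y)
    (hq : q '' ball (0 : X) 1 = ball (0 : Y) 1) :
    IsCGrothendieck c Y := by
  intro g hg
  let T := q.precompIsometry ℝ ℝ hq
  have hTg : IsBounded (range (T ∘ g)) := by
    rw [range_comp]
    exact T.lipschitz.isBounded_image hg
  calc deltaW g ≤ deltaW (T ∘ g) := deltaW_le_deltaW_comp T hg
    _ ≤ c * deltaWStar (T ∘ g) := hX _ hTg
    _ ≤ c * deltaWStar g :=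
      mul_le_mul_of_nonneg_left (deltaWStar_comp_le (q.opNorm_le_one_of_image_ball hq) hg)
        (by linarith)

/-- The `c`-Grothendieck property passes to quotients: if `q : X → Y` is a surjective bounded
linear quotient map (mapping the open unit ball of `X` onto the open unit ball of `Y`) and `X`
is `c`-Grothendieck, then so is `Y`. -/
theorem isCGrothendieck_quotient {X Y : Type*} [NormedAddCommGroup X] [NormedSpace ℝ X]
    [CompleteSpace X] [NormedAddCommGroup Y] [NormedSpace ℝ Y] [CompleteSpace Y]
    (c : ℝ) (hc : 1 ≤ c) (hX : IsCGrothendieck c X)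
    (q : X →L[ℝ] Y) (hsurj : Function.Surjective q)
    (hq : q '' ball (0 : X) 1 = ball (0 : Y) 1) :
    IsCGrothendieck c Y :=
  isCGrothendieck_quotient_general c hc hX q hq
end

section
/- Let X be a Banach space, Y ⊆ X a subspace, x* ∈ X* with ‖x*‖ = 1 and x*|_Y = 0, x₀ ∈ X with x*(x₀) = 1, η ∈ (0,1], and c ≥ 1. Define B = { x ∈ X : ‖x − x*(x)x₀‖ ≤ 1 and |x*(x)| + dist(x − x*(x)x₀, Y) ≤ η/c }. Then B is a closed absolutely convex set satisfying (η/(c(2+‖x₀‖)))·B_X ⊆ B ⊆ (1 + η/c)‖x₀‖·B_X; in particular, B is the closed unit ball of an equivalent norm on X. -/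
open Filter Metric Topology Pointwise

/-!
Write `P x = x - f x • x₀`. Since `dist (z, Y)` is the quotient norm of `z` in `X ⧸ Y`,
`B` is the closed unit ball of the seminorm `p x = max ‖P x‖ ((c / η) (|f x| + dist (P x, Y)))`.
From `‖P x‖ ≤ (1 + ‖x₀‖) ‖x‖` one gets `p x ≤ (c / η) (2 + ‖x₀‖) ‖x‖`, and from
`x = P x + f x • x₀` one gets `‖x‖ ≤ (1 + (η / c) ‖x₀‖) p x ≤ (1 + η / c) ‖x₀‖ p x`, because
`f x₀ = 1` and `‖f‖ = 1` force `‖x₀‖ ≥ 1`. A seminorm squeezed between two multiples of the norm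
is continuous and its closed unit ball lies between the corresponding multiples of `B_X`.
-/

namespace Seminorm

variable {E : Type*} [NormedAddCommGroup E] [NormedSpace ℝ E] {p : Seminorm ℝ E}

theorem smul_closedBall_subset_closedBall_zero {r : ℝ} (hr : 0 < r)
    (h : ∀ x, p x ≤ r⁻¹ * ‖x‖) : r • Metric.closedBall (0 : E) 1 ⊆ p.closedBall 0 1 := by
  rw [smul_unitClosedBall_of_nonneg hr.le]
  intro x hx
  rw [mem_closedBall_zero_iff] at hx
  rw [mem_closedBall_zero]
  calc p x ≤ r⁻¹ * ‖x‖ := h x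
    _ ≤ r⁻¹ * r := by gcongr
    _ = 1 := inv_mul_cancel₀ hr.ne'

theorem closedBall_zero_subset_smul_closedBall {R : ℝ} (hR : 0 ≤ R)
    (h : ∀ x, ‖x‖ ≤ R * p x) : p.closedBall 0 1 ⊆ R • Metric.closedBall (0 : E) 1 := by
  rw [smul_unitClosedBall_of_nonneg hR]
  intro x hx
  rw [mem_closedBall_zero] at hx
  rw [mem_closedBall_zero_iff]
  calc ‖x‖ ≤ R * p x := h x
    _ ≤ R := mul_le_of_le_one_right hR hx

theorem continuous_of_le_mul_norm {r : ℝ} (hr : 0 < r) (h : ∀ x, p x ≤ r⁻¹ * ‖x‖) :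
    Continuous p :=
  Seminorm.continuous' <| mem_of_superset (Metric.closedBall_mem_nhds 0 hr) <| by
    simpa only [smul_unitClosedBall_of_nonneg hr.le] using
      smul_closedBall_subset_closedBall_zero hr h

end Seminorm

section Renorming

variable {X : Type*} [NormedAddCommGroup X] [NormedSpace ℝ X]

theorem norm_le_norm_sub_smul_add (x x₀ : X) (a : ℝ) : ‖x‖ ≤ ‖x - a • x₀‖ + |a| * ‖x₀‖ := by
  simpa [norm_smul, add_comm] using norm_le_norm_add_norm_sub' x (a • x₀)

theorem abs_apply_le_norm {f : X →L[ℝ] ℝ} (hf : ‖f‖ ≤ 1) (x : X) : |f x| ≤ ‖x‖ := by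
  simpa using f.le_of_opNorm_le hf x

theorem one_le_norm_of_apply_eq_one {f : X →L[ℝ] ℝ} (hf : ‖f‖ ≤ 1) {x₀ : X} (hx₀ : f x₀ = 1) :
    1 ≤ ‖x₀‖ := by
  simpa [hx₀] using abs_apply_le_norm hf x₀

theorem norm_sub_smul_le {f : X →L[ℝ] ℝ} (hf : ‖f‖ ≤ 1) (x x₀ : X) :
    ‖x - f x • x₀‖ ≤ (1 + ‖x₀‖) * ‖x‖ := by
  calc ‖x - f x • x₀‖ ≤ ‖x‖ + |f x| * ‖x₀‖ := by
        simpa [norm_smul] using norm_sub_le x (f x • x₀)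
    _ ≤ (1 + ‖x₀‖) * ‖x‖ := by nlinarith [abs_apply_le_norm hf x, norm_nonneg x₀]

noncomputable def renormingSeminorm (Y : Submodule ℝ X) (f : X →L[ℝ] ℝ) (x₀ : X) (k : NNReal) :
    Seminorm ℝ X :=
  let P : X →ₗ[ℝ] X := LinearMap.id - (f : X →ₗ[ℝ] ℝ).smulRight x₀
  (normSeminorm ℝ X).comp P ⊔
    k • ((normSeminorm ℝ ℝ).comp (f : X →ₗ[ℝ] ℝ) + (normSeminorm ℝ (X ⧸ Y)).comp (Y.mkQ ∘ₗ P))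

variable (Y : Submodule ℝ X) (x₀ : X)

theorem renormingSeminorm_apply (f : X →L[ℝ] ℝ) (k : NNReal) (x : X) :
    renormingSeminorm Y f x₀ k x =
      max ‖x - f x • x₀‖ (k * (|f x| + infDist (x - f x • x₀) (Y : Set X))) := by
  have hquot : ∀ z : X, ‖Submodule.Quotient.mk (p := Y) z‖ = infDist z Y :=
    QuotientAddGroup.norm_mk
  simp [renormingSeminorm, NNReal.smul_def, -Submodule.Quotient.mk_smul,
    -Submodule.Quotient.mk_sub, hquot, mul_add]

theorem renormingSeminorm_le_mul_norm {f : X →L[ℝ] ℝ} (hf : ‖f‖ ≤ 1) {k : NNReal} (hk : 1 ≤ k)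
    (x : X) : renormingSeminorm Y f x₀ k x ≤ k * (2 + ‖x₀‖) * ‖x‖ := by
  have hP := norm_sub_smul_le hf x x₀
  have hdist : infDist (x - f x • x₀) (Y : Set X) ≤ ‖x - f x • x₀‖ := by
    simpa using infDist_le_dist_of_mem (x := x - f x • x₀) Y.zero_mem
  have hk' : (1 : ℝ) ≤ k := hk
  rw [renormingSeminorm_apply]
  refine max_le ?_ ?_
  · calc ‖x - f x • x₀‖ ≤ (1 + ‖x₀‖) * ‖x‖ := hP
      _ ≤ k * (2 + ‖x₀‖) * ‖x‖ := by gcongr; nlinarith [norm_nonneg x₀]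
  · calc (k : ℝ) * (|f x| + infDist (x - f x • x₀) Y) ≤ k * (‖x‖ + (1 + ‖x₀‖) * ‖x‖) := by
          gcongr
          · exact abs_apply_le_norm hf x
          · exact hdist.trans hP
      _ = k * (2 + ‖x₀‖) * ‖x‖ := by ring

theorem norm_le_mul_renormingSeminorm (f : X →L[ℝ] ℝ) {k : NNReal} (hk : 0 < k) (x : X) :
    ‖x‖ ≤ (1 + ‖x₀‖ / k) * renormingSeminorm Y f x₀ k x := by
  set p := renormingSeminorm Y f x₀ k
  have hP : ‖x - f x • x₀‖ ≤ p x := by rw [renormingSeminorm_apply]; exact le_max_left _ _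
  have hf : k * |f x| ≤ p x := by
    rw [renormingSeminorm_apply]
    refine le_max_of_le_right ?_
    gcongr
    exact le_add_of_nonneg_right infDist_nonneg
  have hk' : (0 : ℝ) < k := hk
  calc ‖x‖ ≤ ‖x - f x • x₀‖ + |f x| * ‖x₀‖ := norm_le_norm_sub_smul_add x x₀ (f x)
    _ ≤ p x + p x / k * ‖x₀‖ := by
        gcongr
        rwa [le_div_iff₀ hk', mul_comm]
    _ = (1 + ‖x₀‖ / k) * p x := by ring

end Renorming

theorem closed_absolutely_convex_body_renorming_general {X : Type*} [NormedAddCommGroup X]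
    [NormedSpace ℝ X] (Y : Submodule ℝ X)
    (f : X →L[ℝ] ℝ) (hf : ‖f‖ = 1)
    (x₀ : X) (hx₀ : f x₀ = 1) (η : ℝ) (hη : η ∈ Set.Ioc (0 : ℝ) 1) (c : ℝ) (hc : 1 ≤ c)
    (B : Set X)
    (hB : B = {x : X | ‖x - f x • x₀‖ ≤ 1 ∧
      |f x| + infDist (x - f x • x₀) (Y : Set X) ≤ η / c}) :
    IsClosed B ∧ Convex ℝ B ∧ Balanced ℝ B ∧
      (η / (c * (2 + ‖x₀‖))) • closedBall (0 : X) 1 ⊆ B ∧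
      B ⊆ ((1 + η / c) * ‖x₀‖) • closedBall (0 : X) 1 ∧
      ∃ (p : Seminorm ℝ X) (a b : ℝ), 0 < a ∧ 0 < b ∧
        (∀ x : X, a * ‖x‖ ≤ p x ∧ p x ≤ b * ‖x‖) ∧ B = {x : X | p x ≤ 1} := by
  obtain ⟨hη, hη1⟩ := hη
  have hN := one_le_norm_of_apply_eq_one hf.le hx₀
  set k : NNReal := (c / η).toNNReal
  have hk : (k : ℝ) = c / η := Real.coe_toNNReal _ (by positivity)
  have hk1 : 1 ≤ k := by rw [← NNReal.coe_le_coe, hk, NNReal.coe_one, one_le_div hη]; linarith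
  set p := renormingSeminorm Y f x₀ k
  have hBp : B = p.closedBall 0 1 := by
    have hscale : ∀ s, c / η * s ≤ 1 ↔ s ≤ η / c := fun s => by
      rw [← le_div_iff₀' (by positivity), one_div_div]
    ext x
    simp [hB, p, renormingSeminorm_apply, hk, hscale]
  set r := η / (c * (2 + ‖x₀‖)) with hr_def
  set R := (1 + η / c) * ‖x₀‖ with hR_def
  have hr : 0 < r := by positivity
  have hR : 0 < R := by positivity
  have hupper : ∀ x, p x ≤ r⁻¹ * ‖x‖ := fun x =>
    calc p x ≤ k * (2 + ‖x₀‖) * ‖x‖ := renormingSeminorm_le_mul_norm Y x₀ hf.le hk1 x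
      _ = r⁻¹ * ‖x‖ := by rw [hk, hr_def, inv_div]; ring
  have hlower : ∀ x, ‖x‖ ≤ R * p x := fun x =>
    calc ‖x‖ ≤ (1 + ‖x₀‖ / k) * p x :=
          norm_le_mul_renormingSeminorm Y x₀ f (one_pos.trans_le hk1) x
      _ ≤ R * p x := by
        gcongr
        rw [hk, hR_def, div_div_eq_mul_div, mul_div_assoc]
        nlinarith [div_pos hη (one_pos.trans_le hc)]
  rw [hBp]
  refine ⟨?_, p.convex_closedBall 0 1, p.balanced_closedBall_zero 1,
    p.smul_closedBall_subset_closedBall_zero hr hupper,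
    p.closedBall_zero_subset_smul_closedBall hR.le hlower,
    p, R⁻¹, r⁻¹, inv_pos.2 hR, inv_pos.2 hr,
    fun x => ⟨(inv_mul_le_iff₀ hR).2 (hlower x), hupper x⟩, p.closedBall_zero_eq⟩
  rw [p.closedBall_zero_eq]
  exact isClosed_le (p.continuous_of_le_mul_norm hr hupper) continuous_const

/-- Let `X` be a Banach space, `Y ⊆ X` a subspace, `f ∈ X*` with `‖f‖ = 1` vanishing on `Y`,
`x₀ ∈ X` with `f x₀ = 1`, `η ∈ (0,1]` and `c ≥ 1`. Then the set
`B = {x : ‖x - f(x)x₀‖ ≤ 1 and |f(x)| + dist(x - f(x)x₀, Y) ≤ η/c}` is a closed absolutely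
convex set (convex and balanced) with
`(η/(c(2+‖x₀‖))) B_X ⊆ B ⊆ (1+η/c)‖x₀‖ B_X`; in particular, it is the closed unit ball of
an equivalent norm on `X`. -/
theorem closed_absolutely_convex_body_renorming {X : Type*} [NormedAddCommGroup X]
    [NormedSpace ℝ X] [CompleteSpace X] (Y : Submodule ℝ X)
    (f : X →L[ℝ] ℝ) (hf : ‖f‖ = 1) (hfY : ∀ y ∈ Y, f y = 0)
    (x₀ : X) (hx₀ : f x₀ = 1) (η : ℝ) (hη : η ∈ Set.Ioc (0 : ℝ) 1) (c : ℝ) (hc : 1 ≤ c)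
    (B : Set X)
    (hB : B = {x : X | ‖x - f x • x₀‖ ≤ 1 ∧
      |f x| + infDist (x - f x • x₀) (Y : Set X) ≤ η / c}) :
    IsClosed B ∧ Convex ℝ B ∧ Balanced ℝ B ∧
      (η / (c * (2 + ‖x₀‖))) • closedBall (0 : X) 1 ⊆ B ∧
      B ⊆ ((1 + η / c) * ‖x₀‖) • closedBall (0 : X) 1 ∧
      ∃ (p : Seminorm ℝ X) (a b : ℝ), 0 < a ∧ 0 < b ∧
        (∀ x : X, a * ‖x‖ ≤ p x ∧ p x ≤ b * ‖x‖) ∧ B = {x : X | p x ≤ 1} :=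
  closed_absolutely_convex_body_renorming_general Y f hf x₀ hx₀ η hη c hc B hB
end
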